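/- Let m, n ≥ 5. If L' is a right ideal with quotient complexity m and L is a left ideal with quotient complexity n (over possibly different alphabets), then κ(L'·L) ≤ m + 2n. Moreover, for all m, n ≥ 5 there exist two-sided ideals L' and L, with alphabets satisfying Σ_{L'} \ Σ_L ≠ ∅ and Σ_L \ Σ_{L'} ≠ ∅, of quotient complexities m and n, such that κ(L'·L) = m + 2n. -/

import Mathlib

/-- The alphabet of a language: letters occurring in some word of `L`. -/
def alphabetOf {α : Type*} (L : Language α) : Set α :=
  {a | ∃ u v : List α, u ++ [a] ++ v ∈ L}

/-- The left quotient of `L` by a word `w`. -/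
def leftQuotient {α : Type*} (L : Language α) (w : List α) : Language α :=
  {x | w ++ x ∈ L}

/-- The set of left quotients of `L` by words over the alphabet of `L`. -/
def quotientSet {α : Type*} (L : Language α) : Set (Language α) :=
  {K | ∃ w : List α, (∀ a ∈ w, a ∈ alphabetOf L) ∧ K = leftQuotient L w}

/-- `L` is regular with quotient complexity `m`: the set of its left quotients
(by words over its own alphabet) is finite of cardinality exactly `m`. -/
def HasComplexity {α : Type*} (L : Language α) (m : ℕ) : Prop :=
  (quotientSet L).Finite ∧ (quotientSet L).ncard = m

/-- All words whose letters lie in `S`. -/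
def starOf {α : Type*} (S : Set α) : Language α :=
  {w | ∀ a ∈ w, a ∈ S}

/-- A nonempty language `L` is a right ideal if `L · Σ_L^* = L`. -/
def IsRightIdeal {α : Type*} (L : Language α) : Prop :=
  (∃ w, w ∈ L) ∧ L * starOf (alphabetOf L) = L

/-- A nonempty language `L` is a left ideal if `Σ_L^* · L = L`. -/
def IsLeftIdeal {α : Type*} (L : Language α) : Prop :=
  (∃ w, w ∈ L) ∧ starOf (alphabetOf L) * L = L

/-- A nonempty language `L` is a two-sided ideal if `Σ_L^* · L · Σ_L^* = L`. -/
def IsTwoSidedIdeal {α : Type*} (L : Language α) : Prop :=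
  (∃ w, w ∈ L) ∧ starOf (alphabetOf L) * L * starOf (alphabetOf L) = L

/-!
The quotients of a product satisfy `w⁻¹(L'L) = (w⁻¹L')L ∪ ⋃ {v⁻¹L | w = uv, u ∈ L'}`. When `L` is
a left ideal, the union is a single quotient of `L` (or empty): the longest admissible `v` gives
the largest quotient. When `L'` is a right ideal and `w` has a prefix in `L'`, `w⁻¹L'` is
`Σ_{L'}^*` or empty. So every quotient of `L'L` is `KL` with `K` empty or a quotient of `L'` not
containing `ε` (at most `m` choices, as the quotient by a word of `L'` contains `ε`), or
`Σ_{L'}^* L ∪ v⁻¹L`, or `v⁻¹L`: at most `m + 2n` of them.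

For tightness take `L'` = words over `{a, c}` with a factor `c^(m-1)`, and `L` = words over
`{b, c}` with a factor `c^(n-1)`. The quotients of `L'L` by `b`, by `c^s` (`s < m - 1`), by
`c^(m-1+j)` and by `c^(m-1) b c^j` (`j < n`) are pairwise distinct: the least `l` with
`c^l` in the quotient and whether it contains `a c^(n-1)` tell them apart.
-/

section Quotients
variable {α : Type*}

@[simp]
lemma mem_leftQuotient {L : Language α} {w x : List α} : x ∈ leftQuotient L w ↔ w ++ x ∈ L :=
  Iff.rfl

lemma leftQuotient_append (L : Language α) (u v : List α) :
    leftQuotient L (u ++ v) = leftQuotient (leftQuotient L u) v := by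
  ext x; simp

@[simp]
lemma mem_starOf {S : Set α} {w : List α} : w ∈ starOf S ↔ ∀ a ∈ w, a ∈ S := Iff.rfl

lemma append_mem_starOf {S : Set α} {u v : List α} :
    u ++ v ∈ starOf S ↔ u ∈ starOf S ∧ v ∈ starOf S := by
  simp only [mem_starOf, List.mem_append]
  exact ⟨fun h => ⟨fun a ha => h a (.inl ha), fun a ha => h a (.inr ha)⟩,
    fun h a ha => ha.elim (h.1 a) (h.2 a)⟩

lemma mem_starOf_alphabetOf {L : Language α} {w : List α} (hw : w ∈ L) :
    w ∈ starOf (alphabetOf L) := by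
  intro a ha
  obtain ⟨s, t, rfl⟩ := List.append_of_mem ha
  exact ⟨s, t, by simpa using hw⟩

lemma starOf_alphabetOf_of_append_mem {L : Language α} {w x : List α} (h : w ++ x ∈ L) :
    w ∈ starOf (alphabetOf L) :=
  (append_mem_starOf.1 (mem_starOf_alphabetOf h)).1

lemma leftQuotient_eq_zero_of_notMem_starOf {L : Language α} {w : List α}
    (hw : w ∉ starOf (alphabetOf L)) : leftQuotient L w = 0 := by
  ext x
  simp only [mem_leftQuotient, Language.notMem_zero, iff_false]
  exact fun h => hw (starOf_alphabetOf_of_append_mem h)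

lemma leftQuotient_mem_insert_zero_quotientSet (L : Language α) (w : List α) :
    leftQuotient L w ∈ insert 0 (quotientSet L) := by
  by_cases hw : w ∈ starOf (alphabetOf L)
  · exact .inr ⟨w, hw, rfl⟩
  · exact .inl (leftQuotient_eq_zero_of_notMem_starOf hw)

lemma nil_mem_starOf (S : Set α) : [] ∈ starOf S := fun _ h => absurd h List.not_mem_nil

lemma le_starOf_mul {L : Language α} (S : Set α) : L ≤ starOf S * L :=
  fun x hx => Language.mem_mul.2 ⟨[], nil_mem_starOf S, x, hx, rfl⟩

lemma le_mul_starOf {L : Language α} (S : Set α) : L ≤ L * starOf S :=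
  fun x hx => Language.mem_mul.2 ⟨x, hx, [], nil_mem_starOf S, x.append_nil⟩

lemma alphabetOf_subset_alphabetOf_mul {L' L : Language α} (hL' : ∃ u, u ∈ L') :
    alphabetOf L ⊆ alphabetOf (L' * L) := by
  obtain ⟨u, hu⟩ := hL'
  rintro d ⟨s, t, h⟩
  exact ⟨u ++ s, t, by simpa using Language.append_mem_mul hu h⟩

def suffixQuotients (L' L : Language α) (w : List α) : Language α :=
  {x | ∃ u v, u ++ v = w ∧ u ∈ L' ∧ v ++ x ∈ L}

lemma leftQuotient_mul (L' L : Language α) (w : List α) :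
    leftQuotient (L' * L) w = leftQuotient L' w * L + suffixQuotients L' L w := by
  ext x
  simp only [mem_leftQuotient, Language.mem_add, Language.mem_mul]
  constructor
  · rintro ⟨y, hy, z, hz, hyz⟩
    rcases List.append_eq_append_iff.1 hyz with ⟨t, rfl, rfl⟩ | ⟨t, rfl, rfl⟩
    · exact .inr ⟨y, t, rfl, hy, hz⟩
    · exact .inl ⟨t, hy, z, hz, rfl⟩
  · rintro (⟨y, hy, z, hz, rfl⟩ | ⟨u, v, rfl, hu, hv⟩)
    · exact ⟨w ++ y, hy, z, hz, by simp⟩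
    · exact ⟨u, hu, v ++ x, hv, by simp⟩

lemma suffixQuotients_eq_zero {L' L : Language α} {w : List α}
    (h : ∀ u v, u ++ v = w → u ∉ L') : suffixQuotients L' L w = 0 := by
  ext x
  simp only [suffixQuotients, Language.notMem_zero, iff_false]
  rintro ⟨u, v, huv, hu, -⟩
  exact h u v huv hu

lemma suffixQuotients_eq_leftQuotient {L' L : Language α} {u₀ v₀ : List α} (hu₀ : u₀ ∈ L')
    (h : ∀ u v, u ++ v = u₀ ++ v₀ → u ∈ L' → u = u₀) :
    suffixQuotients L' L (u₀ ++ v₀) = leftQuotient L v₀ := by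
  ext x
  constructor
  · rintro ⟨u, v, huv, hu, hv⟩
    obtain rfl := h u v huv hu
    rwa [List.append_cancel_left huv] at hv
  · exact fun hx => ⟨u₀, v₀, rfl, hu₀, hx⟩

end Quotients

section Ideals
variable {α : Type*} {L L' : Language α}

lemma IsRightIdeal.append_mem (hR : IsRightIdeal L') {u v : List α} (hu : u ∈ L')
    (hv : v ∈ starOf (alphabetOf L')) : u ++ v ∈ L' := by
  rw [← hR.2]
  exact Language.append_mem_mul hu hv

lemma IsRightIdeal.leftQuotient_eq_starOf (hR : IsRightIdeal L') {w : List α} (hw : w ∈ L') :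
    leftQuotient L' w = starOf (alphabetOf L') := by
  ext x
  exact ⟨fun h => (append_mem_starOf.1 (mem_starOf_alphabetOf h)).2, hR.append_mem hw⟩

lemma IsRightIdeal.leftQuotient_eq_zero (hR : IsRightIdeal L') {u v : List α} (hu : u ∈ L')
    (huv : u ++ v ∉ L') : leftQuotient L' (u ++ v) = 0 := by
  refine leftQuotient_eq_zero_of_notMem_starOf fun h => huv (hR.append_mem hu ?_)
  exact (append_mem_starOf.1 h).2

lemma IsLeftIdeal.leftQuotient_le (hL : IsLeftIdeal L) {y : List α}
    (hy : y ∈ starOf (alphabetOf L)) (v : List α) :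
    leftQuotient L v ≤ leftQuotient L (y ++ v) := by
  intro x (hx : v ++ x ∈ L)
  show (y ++ v) ++ x ∈ L
  rw [List.append_assoc, ← hL.2]
  exact Language.append_mem_mul hy hx

lemma IsLeftIdeal.suffixQuotients_eq_zero_or_mem (hL : IsLeftIdeal L) (L' : Language α)
    (w : List α) :
    suffixQuotients L' L w = 0 ∨ suffixQuotients L' L w ∈ quotientSet L := by
  classical
  let P : ℕ → Prop := fun k => w.take k ∈ L' ∧ w.drop k ∈ starOf (alphabetOf L)
  have hP : ∀ {u v x}, u ++ v = w → u ∈ L' → v ++ x ∈ L → P u.length := by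
    rintro u v x rfl hu hv
    simpa [P] using ⟨hu, starOf_alphabetOf_of_append_mem hv⟩
  by_cases hex : ∃ k, P k
  · right
    let k₀ := Nat.find hex
    have hk₀ : P k₀ := Nat.find_spec hex
    refine ⟨w.drop k₀, hk₀.2, ?_⟩
    ext x
    constructor
    · rintro ⟨u, v, huv, hu, hv⟩
      have hle : k₀ ≤ u.length := Nat.find_min' hex (hP huv hu hv)
      have hv' : (w.drop k₀).drop (u.length - k₀) = v := by
        rw [List.drop_drop, Nat.add_sub_cancel' hle, ← huv, List.drop_left]
      have hk₀' := hk₀.2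
      rw [← List.take_append_drop (u.length - k₀) (w.drop k₀), hv'] at hk₀' ⊢
      exact hL.leftQuotient_le (append_mem_starOf.1 hk₀').1 v hv
    · exact fun hx => ⟨w.take k₀, w.drop k₀, List.take_append_drop _ _, hk₀.1, hx⟩
  · left
    ext x
    simp only [Language.notMem_zero, iff_false]
    rintro ⟨u, v, huv, hu, hv⟩
    exact hex ⟨_, hP huv hu hv⟩

lemma IsTwoSidedIdeal.isRightIdeal (h : IsTwoSidedIdeal L) : IsRightIdeal L := by
  refine ⟨h.1, le_antisymm ?_ (le_mul_starOf _)⟩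
  conv_rhs => rw [← h.2]
  exact mul_le_mul_left (le_starOf_mul _) _

lemma IsTwoSidedIdeal.isLeftIdeal (h : IsTwoSidedIdeal L) : IsLeftIdeal L := by
  refine ⟨h.1, le_antisymm ?_ (le_starOf_mul _)⟩
  conv_rhs => rw [← h.2]
  exact le_mul_starOf _

end Ideals

section UpperBound
variable {α : Type*} {L' L : Language α}

lemma ncard_nil_notMem_quotients_le {m : ℕ} (hne : ∃ w, w ∈ L) (hL : HasComplexity L m) :
    {K ∈ insert 0 (quotientSet L) | [] ∉ K}.ncard ≤ m := by
  obtain ⟨u, hu⟩ := hne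
  have hfin : (insert 0 (quotientSet L)).Finite := hL.1.insert 0
  have huQ : leftQuotient L u ∈ insert 0 (quotientSet L) :=
    .inr ⟨u, mem_starOf_alphabetOf hu, rfl⟩
  have hsub : {K ∈ insert 0 (quotientSet L) | [] ∉ K} ⊆
      insert 0 (quotientSet L) \ {leftQuotient L u} := by
    rintro K ⟨hK, hnil⟩
    refine ⟨hK, fun (h : K = _) => hnil ?_⟩
    simpa [h] using hu
  calc _ ≤ (insert 0 (quotientSet L) \ {leftQuotient L u}).ncard :=
        Set.ncard_le_ncard hsub hfin.sdiff
    _ = (insert 0 (quotientSet L)).ncard - 1 := Set.ncard_sdiff_singleton_of_mem huQ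
    _ ≤ m := by
        have := Set.ncard_insert_le 0 (quotientSet L)
        rw [hL.2] at this
        omega

lemma leftQuotient_mul_mem (hR : IsRightIdeal L') (hL : IsLeftIdeal L) (w : List α) :
    leftQuotient (L' * L) w ∈
      (· * L) '' {K ∈ insert 0 (quotientSet L') | [] ∉ K} ∪
      (starOf (alphabetOf L') * L + ·) '' quotientSet L ∪ quotientSet L := by
  rw [leftQuotient_mul]
  by_cases hU : suffixQuotients L' L w = 0
  · rw [hU, add_zero]
    by_cases hnil : [] ∈ leftQuotient L' w
    · refine .inl (.inr ⟨L, ⟨[], nil_mem_starOf _, rfl⟩, ?_⟩)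
      rw [hR.leftQuotient_eq_starOf (by simpa using hnil)]
      exact Language.ext fun x => ⟨fun h => h.elim id (le_starOf_mul _ ·), .inl⟩
    · exact .inl (.inl ⟨_, ⟨leftQuotient_mem_insert_zero_quotientSet L' w, hnil⟩, rfl⟩)
  · have hUQ := (hL.suffixQuotients_eq_zero_or_mem L' w).resolve_left hU
    by_cases hw : w ∈ L'
    · rw [hR.leftQuotient_eq_starOf hw]
      exact .inl (.inr ⟨_, hUQ, rfl⟩)
    · obtain ⟨x, u, v, rfl, hu, -⟩ := Set.nonempty_iff_ne_empty.2 hU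
      rw [hR.leftQuotient_eq_zero hu hw, zero_mul, zero_add]
      exact .inr hUQ

theorem quotientSet_mul_finite_and_ncard_le {m n : ℕ} (hR : IsRightIdeal L') (hL : IsLeftIdeal L)
    (hm : HasComplexity L' m) (hn : HasComplexity L n) :
    (quotientSet (L' * L)).Finite ∧ (quotientSet (L' * L)).ncard ≤ m + 2 * n := by
  have hK : {K ∈ insert 0 (quotientSet L') | [] ∉ K}.Finite :=
    (hm.1.insert 0).subset fun _ hK => hK.1
  set A := (· * L) '' {K ∈ insert 0 (quotientSet L') | [] ∉ K}
  set B := (starOf (alphabetOf L') * L + ·) '' quotientSet L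
  have hfin : (A ∪ B ∪ quotientSet L).Finite := ((hK.image _).union (hn.1.image _)).union hn.1
  have hsub : quotientSet (L' * L) ⊆ A ∪ B ∪ quotientSet L := by
    rintro K ⟨w, -, rfl⟩
    exact leftQuotient_mul_mem hR hL w
  refine ⟨hfin.subset hsub, ?_⟩
  calc (quotientSet (L' * L)).ncard ≤ (A ∪ B ∪ quotientSet L).ncard :=
        Set.ncard_le_ncard hsub hfin
    _ ≤ A.ncard + B.ncard + (quotientSet L).ncard := by
        grw [Set.ncard_union_le, Set.ncard_union_le]
    _ ≤ m + n + n := by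
        gcongr
        · exact (Set.ncard_image_le hK).trans (ncard_nil_notMem_quotients_le hR.1 hm)
        · exact (Set.ncard_image_le hn.1).trans hn.2.le
        · exact hn.2.le
    _ = m + 2 * n := by ring

end UpperBound

lemma List.IsInfix.of_append_cons {α : Type*} {r xs ys : List α} {d : α} (hd : d ∉ r)
    (h : r <:+: xs ++ d :: ys) : r <:+: xs ∨ r <:+: ys := by
  have nil_of_prefix : ∀ {l}, d ∉ l → l <+: d :: ys → l = [] := by
    intro l hl h
    rcases List.prefix_cons_iff.1 h with h | ⟨t, rfl, -⟩
    · exact h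
    · simp at hl
  rw [← List.singleton_append, List.infix_append_iff, List.singleton_append] at h
  rcases h with h | h | ⟨l₁, l₂, rfl, hl₁, hl₂⟩
  · exact .inl h
  · rcases List.infix_cons_iff.1 h with h | h
    · exact .inl (nil_of_prefix hd h ▸ List.nil_infix)
    · exact .inr h
  · rw [nil_of_prefix (fun h => hd (List.mem_append_right _ h)) hl₂, List.append_nil]
    exact .inl hl₁.isInfix

section FactorIdeal
variable {α : Type*} {a b c : α} {p q : ℕ}

open List (replicate)

def factorIdeal (a c : α) (p : ℕ) : Language α :=
  {w | w ∈ starOf {a, c} ∧ replicate p c <:+: w}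

lemma mem_factorIdeal {w : List α} :
    w ∈ factorIdeal a c p ↔ w ∈ starOf {a, c} ∧ replicate p c <:+: w := Iff.rfl

lemma replicate_mem_factorIdeal {l : ℕ} : replicate l c ∈ factorIdeal a c p ↔ p ≤ l := by
  simp [mem_factorIdeal, List.infix_replicate_iff]

lemma length_le_of_mem_factorIdeal {w : List α} (hw : w ∈ factorIdeal a c p) : p ≤ w.length := by
  simpa using hw.2.length_le

lemma alphabetOf_factorIdeal : alphabetOf (factorIdeal a c p) = {a, c} := by
  ext d
  refine ⟨fun ⟨u, v, h⟩ => h.1 d (by simp), fun hd => ⟨[], replicate p c, ?_, ?_⟩⟩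
  · simpa using hd
  · exact List.infix_append_right

lemma isTwoSidedIdeal_factorIdeal : IsTwoSidedIdeal (factorIdeal a c p) := by
  refine ⟨⟨_, replicate_mem_factorIdeal.2 le_rfl⟩, ?_⟩
  rw [alphabetOf_factorIdeal]
  refine le_antisymm ?_ ((le_starOf_mul _).trans (le_mul_starOf _))
  rintro _ ⟨_, ⟨y, hy, z, hz, rfl⟩, t, ht, rfl⟩
  refine ⟨append_mem_starOf.2 ⟨append_mem_starOf.2 ⟨hy, hz.1⟩, ht⟩, ?_⟩
  exact List.infix_append_of_infix_left (List.infix_append_of_infix_right hz.2)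

lemma replicate_mem_leftQuotient_factorIdeal {s l : ℕ} :
    replicate l c ∈ leftQuotient (factorIdeal a c p) (replicate s c) ↔ p ≤ s + l := by
  rw [mem_leftQuotient, ← List.replicate_add, replicate_mem_factorIdeal]

lemma leftQuotient_factorIdeal_replicate_append_cons (hac : a ≠ c) {s : ℕ} (hs : s < p)
    (w : List α) :
    leftQuotient (factorIdeal a c p) (replicate s c ++ a :: w) =
      leftQuotient (factorIdeal a c p) w := by
  ext x
  simp only [mem_leftQuotient, mem_factorIdeal, List.append_assoc, List.cons_append]
  constructor
  · rintro ⟨hst, hinf⟩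
    refine ⟨fun d hd => hst d (by simp [hd]), ?_⟩
    rcases hinf.of_append_cons (by simp [hac]) with h | h
    · simpa using (h.length_le.trans_lt (by simpa using hs)).false
    · exact h
  · rintro ⟨hst, hinf⟩
    refine ⟨?_, List.infix_append_of_infix_right (List.infix_cons hinf)⟩
    simp only [mem_starOf, List.mem_append, List.mem_cons, List.mem_replicate] at hst ⊢
    rintro d (⟨-, rfl⟩ | rfl | hd)
    · simp
    · simp
    · exact hst d hd

lemma exists_leftQuotient_factorIdeal_eq (hac : a ≠ c) {w : List α} (hw : w ∈ starOf {a, c}) :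
    ∃ s ≤ p, leftQuotient (factorIdeal a c p) w =
      leftQuotient (factorIdeal a c p) (replicate s c) := by
  induction w using List.reverseRecOn with
  | nil => exact ⟨0, p.zero_le, rfl⟩
  | append_singleton w d ih =>
    obtain ⟨hw, hd⟩ := append_mem_starOf.1 hw
    obtain ⟨s, hsp, hs⟩ := ih hw
    rw [leftQuotient_append, hs, ← leftQuotient_append]
    rcases hsp.lt_or_eq with hsp | rfl
    · rcases hd d (by simp) with rfl | rfl
      · exact ⟨0, p.zero_le, leftQuotient_factorIdeal_replicate_append_cons hac hsp []⟩
      · exact ⟨s + 1, hsp, by rw [← List.replicate_succ']⟩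
    · have hR := isTwoSidedIdeal_factorIdeal (a := a) (c := c) (p := s) |>.isRightIdeal
      refine ⟨s, le_rfl, ?_⟩
      rw [hR.leftQuotient_eq_starOf (replicate_mem_factorIdeal.2 le_rfl),
        hR.leftQuotient_eq_starOf ⟨append_mem_starOf.2 ⟨fun e he => by simp_all, hd⟩,
          List.infix_append_of_infix_left (List.infix_refl _)⟩]

lemma hasComplexity_factorIdeal (hac : a ≠ c) : HasComplexity (factorIdeal a c p) (p + 1) := by
  let f : Fin (p + 1) → Language α := fun s => leftQuotient (factorIdeal a c p) (replicate s c)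
  have hf : f.Injective := by
    intro s t hst
    have key (l : ℕ) : p ≤ s + l ↔ p ≤ t + l := by
      rw [← replicate_mem_leftQuotient_factorIdeal (a := a),
        ← replicate_mem_leftQuotient_factorIdeal (a := a)]
      exact Iff.of_eq (congrArg (replicate l c ∈ ·) hst)
    have := (key (p - s)).1
    have := (key (p - t)).2
    omega
  have hrange : quotientSet (factorIdeal a c p) = Set.range f := by
    ext K
    constructor
    · rintro ⟨w, hw, rfl⟩
      rw [alphabetOf_factorIdeal] at hw
      obtain ⟨s, hsp, hs⟩ := exists_leftQuotient_factorIdeal_eq hac hw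
      exact ⟨⟨s, Nat.lt_succ_of_le hsp⟩, hs.symm⟩
    · rintro ⟨s, rfl⟩
      refine ⟨replicate s c, fun d hd => ?_, rfl⟩
      simp [alphabetOf_factorIdeal, List.eq_of_mem_replicate hd]
  rw [HasComplexity, hrange, Set.ncard_range_of_injective hf, Nat.card_fin]
  exact ⟨Set.finite_range f, rfl⟩

lemma leftQuotient_factorIdeal_mul_singleton (hab : a ≠ b) (hbc : b ≠ c) (hp : 0 < p) :
    leftQuotient (factorIdeal a c p * factorIdeal b c q) [b] = 0 := by
  have hb : [b] ∉ starOf {a, c} := by simp [hab.symm, hbc]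
  rw [leftQuotient_mul, leftQuotient_eq_zero_of_notMem_starOf (by rwa [alphabetOf_factorIdeal]),
    zero_mul, zero_add, suffixQuotients_eq_zero]
  intro u v huv hu
  rcases List.append_eq_singleton_iff.1 huv with ⟨rfl, -⟩ | ⟨rfl, -⟩
  · exact (length_le_of_mem_factorIdeal hu).not_gt hp
  · exact hb hu.1

lemma leftQuotient_factorIdeal_mul_replicate_of_lt {s : ℕ} (hs : s < p) :
    leftQuotient (factorIdeal a c p * factorIdeal b c q) (replicate s c) =
      leftQuotient (factorIdeal a c p) (replicate s c) * factorIdeal b c q := by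
  rw [leftQuotient_mul, suffixQuotients_eq_zero, add_zero]
  intro u v huv hu
  have := congrArg List.length huv
  have := length_le_of_mem_factorIdeal hu
  simp only [List.length_append, List.length_replicate] at *
  omega

lemma leftQuotient_factorIdeal_mul_replicate_add (j : ℕ) :
    leftQuotient (factorIdeal a c p * factorIdeal b c q) (replicate (p + j) c) =
      starOf {a, c} * factorIdeal b c q + leftQuotient (factorIdeal b c q) (replicate j c) := by
  rw [leftQuotient_mul, isTwoSidedIdeal_factorIdeal.isRightIdeal.leftQuotient_eq_starOf
    (replicate_mem_factorIdeal.2 (p.le_add_right j)), alphabetOf_factorIdeal]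
  congr 1
  ext x
  refine ⟨fun ⟨u, v, huv, hu, hv⟩ => ?_, fun hx => ⟨_, _, (List.replicate_add ..).symm,
    replicate_mem_factorIdeal.2 le_rfl, hx⟩⟩
  obtain ⟨hlen, -, hv'⟩ := List.append_eq_replicate_iff.1 huv
  have := length_le_of_mem_factorIdeal hu
  rw [hv'] at hv
  have hj : replicate j c = replicate (j - v.length) c ++ replicate v.length c := by
    rw [← List.replicate_add]; congr 1; omega
  rw [mem_leftQuotient, hj]
  refine isTwoSidedIdeal_factorIdeal.isLeftIdeal.leftQuotient_le ?_ _ hv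
  simp [alphabetOf_factorIdeal]

lemma leftQuotient_factorIdeal_mul_replicate_append_cons (hab : a ≠ b) (hbc : b ≠ c) (hq : 0 < q)
    (j : ℕ) :
    leftQuotient (factorIdeal a c p * factorIdeal b c q) (replicate p c ++ b :: replicate j c) =
      leftQuotient (factorIdeal b c q) (replicate j c) := by
  have hb : ∀ {w : List α}, b ∈ w → w ∉ starOf {a, c} := fun hw h => by
    simpa [hab.symm, hbc] using h b hw
  rw [leftQuotient_mul, leftQuotient_eq_zero_of_notMem_starOf
      (by rw [alphabetOf_factorIdeal]; exact hb (by simp)), zero_mul, zero_add,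
    suffixQuotients_eq_leftQuotient (replicate_mem_factorIdeal.2 le_rfl)]
  · simpa using leftQuotient_factorIdeal_replicate_append_cons hbc hq (replicate j c)
  intro u v huv hu
  rcases List.append_eq_append_iff.1 huv with ⟨t, ht, -⟩ | ⟨t, rfl, ht⟩
  · have := congrArg List.length ht
    have := length_le_of_mem_factorIdeal hu
    simp only [List.length_append, List.length_replicate] at *
    rw [List.eq_nil_of_length_eq_zero (by omega : t.length = 0), List.append_nil] at ht
    exact ht.symm
  · rcases t with _ | ⟨d, t⟩
    · exact List.append_nil _
    · obtain ⟨rfl, -⟩ := List.cons_eq_cons.1 ht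
      exact absurd hu.1 (hb (by simp))

lemma replicate_mem_mul_factorIdeal {K : Language α} {N : ℕ}
    (hK : ∀ i, replicate i c ∈ K ↔ N ≤ i) (l : ℕ) :
    replicate l c ∈ K * factorIdeal b c q ↔ N + q ≤ l := by
  rw [Language.mem_mul]
  constructor
  · rintro ⟨x, hx, y, hy, hxy⟩
    obtain ⟨hlen, hx', -⟩ := List.append_eq_replicate_iff.1 hxy
    rw [hx', hK] at hx
    have := length_le_of_mem_factorIdeal hy
    omega
  · intro hl
    refine ⟨replicate N c, (hK N).2 le_rfl, replicate (l - N) c,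
      replicate_mem_factorIdeal.2 (by omega), ?_⟩
    rw [← List.replicate_add, Nat.add_sub_cancel' (by omega)]

/-- The quotients of `factorIdeal a c p * factorIdeal b c q` by `b` (for `none`) and by `c^s`
with `s < p`. -/
def quotientBeforeFactor (a b c : α) (p q : ℕ) (s : Option (Fin p)) : Language α :=
  s.elim 0 fun s => leftQuotient (factorIdeal a c p) (replicate s c) * factorIdeal b c q

/-- The quotients of `factorIdeal a c p * factorIdeal b c q` by `c^(p+j)` (for `true`) and by
`c^p b c^j` (for `false`). -/
def quotientAfterFactor (a b c : α) (q : ℕ) (x : Bool × Fin (q + 1)) : Language α :=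
  (if x.1 then starOf {a, c} * factorIdeal b c q else 0) +
    leftQuotient (factorIdeal b c q) (replicate x.2 c)

lemma replicate_mem_quotientBeforeFactor {s : Fin p} {l : ℕ} :
    replicate l c ∈ quotientBeforeFactor a b c p q (some s) ↔ p - s + q ≤ l :=
  replicate_mem_mul_factorIdeal (fun i => replicate_mem_leftQuotient_factorIdeal.trans
    (show p ≤ s + i ↔ p - s ≤ i by omega)) l

lemma replicate_mem_quotientAfterFactor {x : Bool × Fin (q + 1)} {l : ℕ} :
    replicate l c ∈ quotientAfterFactor a b c q x ↔ q ≤ x.2 + l := by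
  have hstar := replicate_mem_mul_factorIdeal (b := b) (c := c) (q := q) (K := starOf {a, c})
    (N := 0) (fun i => by simp [mem_starOf]) l
  rcases x with ⟨_ | _, j⟩ <;>
    simp only [quotientAfterFactor, Language.mem_add, replicate_mem_leftQuotient_factorIdeal,
      hstar, if_true, Bool.false_eq_true, if_false, Language.notMem_zero, false_or]
  omega

lemma cons_replicate_mem_quotientAfterFactor_iff (hab : a ≠ b) (hac : a ≠ c)
    {x : Bool × Fin (q + 1)} :
    a :: replicate q c ∈ quotientAfterFactor a b c q x ↔ x.1 = true := by
  have hL : a :: replicate q c ∉ leftQuotient (factorIdeal b c q) (replicate x.2 c) := fun h => by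
    simpa [hab, hac] using h.1 a (by simp)
  rcases x with ⟨_ | _, j⟩
  · simpa [quotientAfterFactor, Language.mem_add] using hL
  · simp only [quotientAfterFactor, Language.mem_add, if_true, iff_true]
    refine .inl (Language.mem_mul.2 ⟨[a], by simp [mem_starOf], _, ?_, rfl⟩)
    exact replicate_mem_factorIdeal.2 le_rfl

lemma quotientBeforeFactor_injective : (quotientBeforeFactor a b c p q).Injective := by
  intro s s' h
  have hc (l : ℕ) := Iff.of_eq (congrArg (replicate l c ∈ ·) h)
  rcases s with _ | s <;> rcases s' with _ | s'
  · rfl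
  · have := (hc (p - s' + q)).2 (replicate_mem_quotientBeforeFactor.2 le_rfl)
    exact absurd this (Language.notMem_zero _)
  · have := (hc (p - s + q)).1 (replicate_mem_quotientBeforeFactor.2 le_rfl)
    exact absurd this (Language.notMem_zero _)
  · simp only [replicate_mem_quotientBeforeFactor] at hc
    have := (hc (p - s + q)).1 le_rfl
    have := (hc (p - s' + q)).2 le_rfl
    have := s.2
    have := s'.2
    simp only [Option.some.injEq]
    omega

lemma quotientAfterFactor_injective (hab : a ≠ b) (hac : a ≠ c) :
    (quotientAfterFactor a b c q).Injective := by
  rintro ⟨t, j⟩ ⟨t', j'⟩ h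
  have hc (l : ℕ) := Iff.of_eq (congrArg (replicate l c ∈ ·) h)
  have ha := Iff.of_eq (congrArg (a :: replicate q c ∈ ·) h)
  simp only [replicate_mem_quotientAfterFactor] at hc
  rw [cons_replicate_mem_quotientAfterFactor_iff hab hac,
    cons_replicate_mem_quotientAfterFactor_iff hab hac] at ha
  have := (hc (q - j)).1 (by omega)
  have := (hc (q - j')).2 (by omega)
  have := j.2
  have := j'.2
  exact Prod.ext (Bool.coe_iff_coe.1 ha) (Fin.ext (show (j : ℕ) = j' by omega))

lemma quotientBeforeFactor_ne_quotientAfterFactor (s : Option (Fin p)) (x : Bool × Fin (q + 1)) :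
    quotientBeforeFactor a b c p q s ≠ quotientAfterFactor a b c q x := by
  intro h
  have hmem : replicate q c ∈ quotientAfterFactor a b c q x :=
    replicate_mem_quotientAfterFactor.2 (by omega)
  rw [← h] at hmem
  rcases s with _ | s
  · exact Language.notMem_zero _ hmem
  · have := replicate_mem_quotientBeforeFactor.1 hmem
    omega

lemma range_sumElim_quotient_subset_quotientSet (hab : a ≠ b) (hbc : b ≠ c) (hp : 0 < p)
    (hq : 0 < q) :
    Set.range (Sum.elim (quotientBeforeFactor a b c p q) (quotientAfterFactor a b c q)) ⊆
      quotientSet (factorIdeal a c p * factorIdeal b c q) := by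
  have hword : ∀ {w : List α}, w ∈ starOf {b, c} →
      w ∈ starOf (alphabetOf (factorIdeal a c p * factorIdeal b c q)) := fun hw d hd =>
    alphabetOf_subset_alphabetOf_mul ⟨_, replicate_mem_factorIdeal.2 le_rfl⟩
      (by rw [alphabetOf_factorIdeal]; exact hw d hd)
  rintro _ ⟨(_ | s) | ⟨_ | _, j⟩, rfl⟩
  · exact ⟨[b], hword (by simp), (leftQuotient_factorIdeal_mul_singleton hab hbc hp).symm⟩
  · exact ⟨replicate s c, hword (by simp [mem_starOf]),
      (leftQuotient_factorIdeal_mul_replicate_of_lt s.2).symm⟩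
  · refine ⟨replicate p c ++ b :: replicate j c, hword (by simp [mem_starOf, or_imp, forall_and]),
      ?_⟩
    simpa [quotientAfterFactor] using
      (leftQuotient_factorIdeal_mul_replicate_append_cons hab hbc hq j).symm
  · refine ⟨replicate (p + j) c, hword (by simp [mem_starOf]), ?_⟩
    simpa [quotientAfterFactor] using (leftQuotient_factorIdeal_mul_replicate_add j).symm

theorem hasComplexity_factorIdeal_mul_factorIdeal (hab : a ≠ b) (hac : a ≠ c) (hbc : b ≠ c)
    (hp : 0 < p) (hq : 0 < q) :
    HasComplexity (factorIdeal a c p * factorIdeal b c q) ((p + 1) + 2 * (q + 1)) := by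
  obtain ⟨hfin, hle⟩ := quotientSet_mul_finite_and_ncard_le (L' := factorIdeal a c p)
    (L := factorIdeal b c q) isTwoSidedIdeal_factorIdeal.isRightIdeal
    isTwoSidedIdeal_factorIdeal.isLeftIdeal (hasComplexity_factorIdeal hac)
    (hasComplexity_factorIdeal hbc)
  have hinj : (Sum.elim (quotientBeforeFactor a b c p q) (quotientAfterFactor a b c q)).Injective :=
    quotientBeforeFactor_injective.sumElim (quotientAfterFactor_injective hab hac)
      quotientBeforeFactor_ne_quotientAfterFactor
  refine ⟨hfin, hle.antisymm ?_⟩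
  calc (p + 1) + 2 * (q + 1) = Nat.card (Option (Fin p) ⊕ Bool × Fin (q + 1)) := by simp
    _ = _ := (Set.ncard_range_of_injective hinj).symm
    _ ≤ _ := Set.ncard_le_ncard (range_sumElim_quotient_subset_quotientSet hab hbc hp hq) hfin

end FactorIdeal

/-- product of a right ideal with a left ideal: upper bound `m + 2n`,
and tightness by two-sided ideals over incomparable alphabets. -/
theorem two_sided_ideal_product (m n : ℕ) (hm : 5 ≤ m) (hn : 5 ≤ n) :
    (∀ (α : Type) (L' L : Language α), IsRightIdeal L' → IsLeftIdeal L →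
      HasComplexity L' m → HasComplexity L n →
      (quotientSet (L' * L)).Finite ∧
        (quotientSet (L' * L)).ncard ≤ m + 2 * n) ∧
    (∃ L' L : Language (Fin 6), IsTwoSidedIdeal L' ∧ IsTwoSidedIdeal L ∧
      (alphabetOf L' \ alphabetOf L).Nonempty ∧
      (alphabetOf L \ alphabetOf L').Nonempty ∧
      HasComplexity L' m ∧ HasComplexity L n ∧
      HasComplexity (L' * L) (m + 2 * n)) := by
  refine ⟨fun _ _ _ hR hL => quotientSet_mul_finite_and_ncard_le hR hL, ?_⟩
  obtain ⟨p, rfl⟩ : ∃ p, m = p + 1 := ⟨m - 1, by omega⟩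
  obtain ⟨q, rfl⟩ : ∃ q, n = q + 1 := ⟨n - 1, by omega⟩
  refine ⟨factorIdeal 0 2 p, factorIdeal 1 2 q, isTwoSidedIdeal_factorIdeal,
    isTwoSidedIdeal_factorIdeal, ⟨0, by simp [alphabetOf_factorIdeal]⟩,
    ⟨1, by simp [alphabetOf_factorIdeal]⟩, hasComplexity_factorIdeal (by decide),
    hasComplexity_factorIdeal (by decide),
    hasComplexity_factorIdeal_mul_factorIdeal (by decide) (by decide) (by decide) (by omega)
      (by omega)⟩
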